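/- Let μ be a probability measure on sequence space Σ = X^ℕ with shift θ, asymptotically mean stationary with asymptotic mean Q, and suppose Q is ergodic for θ. Then for every measurable B ⊆ X, μ-almost every sequence x satisfies (1/T)·∑_{t=0}^{T−1} 1_B(x_t) → Q₀(B), where Q₀ is the one-dimensional marginal of Q. -/

import Mathlib

/-!
The time averages of `1_B(x_t)` are the Birkhoff averages, under the shift `θ`, of the indicator
of the cylinder `{y | y 0 ∈ B}`. For ergodic `Q` they converge `Q`-a.e. to `Q₀(B)` by Birkhoff's
pointwise ergodic theorem, which follows from the maximal ergodic theorem once one notes that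
the limsup of the averages of a bounded function is `θ`-invariant, hence a.e. constant.
The set `G` of convergent sequences is `θ`-invariant, so the Cesàro averages of
`μ (θ^[t] ⁻¹' G)` are all `μ G`, and asymptotic mean stationarity forces `μ G = Q G = 1`.
-/

open MeasureTheory Filter Finset Topology

theorem Real.limsup_add_of_right_tendsto_zero {ι : Type*} {l : Filter ι} [l.NeBot] {u w : ι → ℝ}
    (hu : IsBoundedUnder (· ≤ ·) l u) (hu' : IsBoundedUnder (· ≥ ·) l u)
    (hw : Tendsto w l (𝓝 0)) :
    limsup (u + w) l = limsup u l := by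
  refine le_antisymm ?_ ?_
  · simpa [hw.limsup_eq] using
      limsup_add_le hu' hu hw.isBoundedUnder_ge.isCoboundedUnder_le hw.isBoundedUnder_le
  · simpa [hw.liminf_eq] using
      le_limsup_add hu hu'.isCoboundedUnder_le hw.isBoundedUnder_le hw.isBoundedUnder_ge

section Birkhoff

variable {α : Type*} {g : α → ℝ} {C : ℝ}

theorem abs_birkhoffAverage_le (hC : ∀ x, |g x| ≤ C) (f : α → α) (n : ℕ) (x : α) :
    |birkhoffAverage ℝ f g n x| ≤ C := by
  rcases eq_or_ne n 0 with rfl | hn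
  · simpa using (abs_nonneg _).trans (hC x)
  have hn' : (0 : ℝ) < n := by positivity
  rw [birkhoffAverage, smul_eq_mul, abs_mul, abs_inv, Nat.abs_cast, inv_mul_le_iff₀ hn']
  calc |birkhoffSum f g n x| ≤ ∑ k ∈ range n, |g (f^[k] x)| := abs_sum_le_sum_abs _ _
    _ ≤ ∑ _k ∈ range n, C := sum_le_sum fun k _ => hC _
    _ = n * C := by simp

theorem isBoundedUnder_le_birkhoffAverage (hC : ∀ x, |g x| ≤ C) (f : α → α) (x : α) :
    IsBoundedUnder (· ≤ ·) atTop (birkhoffAverage ℝ f g · x) :=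
  isBoundedUnder_of ⟨C, fun n => (le_abs_self _).trans (abs_birkhoffAverage_le hC f n x)⟩

theorem isBoundedUnder_ge_birkhoffAverage (hC : ∀ x, |g x| ≤ C) (f : α → α) (x : α) :
    IsBoundedUnder (· ≥ ·) atTop (birkhoffAverage ℝ f g · x) :=
  isBoundedUnder_of ⟨-C, fun n => neg_le_of_abs_le (abs_birkhoffAverage_le hC f n x)⟩

theorem tendsto_birkhoffAverage_apply_sub_birkhoffAverage_of_abs_le (hC : ∀ x, |g x| ≤ C)
    (f : α → α) (x : α) :
    Tendsto (fun n => birkhoffAverage ℝ f g n (f x) - birkhoffAverage ℝ f g n x) atTop (𝓝 0) :=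
  tendsto_birkhoffAverage_apply_sub_birkhoffAverage' ℝ
    (isBounded_iff_forall_norm_le.2 ⟨C, by rintro _ ⟨y, rfl⟩; exact hC y⟩) f x

theorem limsup_birkhoffAverage_apply_eq (hC : ∀ x, |g x| ≤ C) (f : α → α) (x : α) :
    limsup (birkhoffAverage ℝ f g · (f x)) atTop = limsup (birkhoffAverage ℝ f g · x) atTop := by
  have := Real.limsup_add_of_right_tendsto_zero (isBoundedUnder_le_birkhoffAverage hC f x)
    (isBoundedUnder_ge_birkhoffAverage hC f x)
    (tendsto_birkhoffAverage_apply_sub_birkhoffAverage_of_abs_le hC f x)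
  convert this using 2
  ext n
  simp

theorem preimage_setOf_tendsto_birkhoffAverage (hC : ∀ x, |g x| ≤ C) (f : α → α) (c : ℝ) :
    f ⁻¹' {x | Tendsto (birkhoffAverage ℝ f g · x) atTop (𝓝 c)} =
      {x | Tendsto (birkhoffAverage ℝ f g · x) atTop (𝓝 c)} := by
  ext x
  have h := tendsto_birkhoffAverage_apply_sub_birkhoffAverage_of_abs_le hC f x
  simp only [Set.mem_preimage, Set.mem_ofPred_eq]
  exact ⟨fun hx => by simpa using hx.sub h, fun hx => by simpa using hx.add h⟩

theorem lt_birkhoffAverage_iff {f : α → α} {n : ℕ} (hn : n ≠ 0) {a : ℝ} {x : α} :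
    a < birkhoffAverage ℝ f g n x ↔ 0 < birkhoffSum f (fun y => g y - a) n x := by
  have hn' : (0 : ℝ) < n := by positivity
  simp [birkhoffAverage, birkhoffSum, sum_sub_distrib, lt_inv_mul_iff₀ hn', mul_comm]

theorem partialSups_birkhoffSum_le_max (f : α → α) (N : ℕ) (x : α) :
    partialSups (birkhoffSum f g) N x ≤ max 0 (g x + partialSups (birkhoffSum f g) N (f x)) := by
  simp only [Pi.partialSups_apply, partialSups_le_iff]
  rintro (_ | k) hk
  · simp
  · rw [birkhoffSum_succ']
    exact le_max_of_le_right (add_le_add le_rfl (le_partialSups_of_le (birkhoffSum f g · (f x))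
      (by omega)))

theorem measurable_birkhoffAverage [MeasurableSpace α] {f : α → α} (hf : Measurable f)
    (hg : Measurable g) (n : ℕ) : Measurable (birkhoffAverage ℝ f g n) := by
  unfold birkhoffAverage birkhoffSum
  fun_prop

end Birkhoff

namespace MeasureTheory.MeasurePreserving

variable {α : Type*} [MeasurableSpace α] {μ : Measure α} {f : α → α} {g : α → ℝ}

theorem integrable_birkhoffSum (hf : MeasurePreserving f μ μ)
    (hg : Integrable g μ) (n : ℕ) : Integrable (birkhoffSum f g n) μ :=
  integrable_finsetSum _ fun k _ => (hf.iterate k).integrable_comp_of_integrable hg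

theorem integrable_partialSups_birkhoffSum (hf : MeasurePreserving f μ μ)
    (hg : Integrable g μ) (N : ℕ) : Integrable (partialSups (birkhoffSum f g) N) μ := by
  rw [partialSups_apply]
  exact sup'_induction (p := (Integrable · μ)) _ _ (fun _ h₁ _ h₂ => Integrable.sup h₁ h₂)
    fun n _ => hf.integrable_birkhoffSum hg n

theorem setIntegral_pos_partialSups_birkhoffSum_nonneg
    (hf : MeasurePreserving f μ μ) (hg : Integrable g μ) (N : ℕ) :
    0 ≤ ∫ x in {x | 0 < partialSups (birkhoffSum f g) N x}, g x ∂μ := by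
  set M := partialSups (birkhoffSum f g) N
  set D := {x | 0 < M x}
  have hM : Integrable M μ := hf.integrable_partialSups_birkhoffSum hg N
  have hMf : Integrable (fun x => M (f x)) μ := hf.integrable_comp_of_integrable hM
  have hM_nonneg : ∀ x, 0 ≤ M x := fun x => by
    simpa [M, Pi.partialSups_apply] using
      le_partialSups_of_le (birkhoffSum f g · x) (Nat.zero_le N)
  have hD : NullMeasurableSet D μ := nullMeasurableSet_lt aemeasurable_const hM.aemeasurable
  have hMD : ∀ x ∈ D, M x - M (f x) ≤ g x := fun x hx => by
    rcases le_max_iff.1 (partialSups_birkhoffSum_le_max f N x) with h | h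
    · exact absurd hx (not_lt.2 h)
    · linarith
  have hM_comp : ∫ x, M (f x) ∂μ = ∫ x, M x ∂μ := by
    rw [← integral_map hf.aemeasurable (hf.map_eq.symm ▸ hM.aestronglyMeasurable), hf.map_eq]
  calc 0 = ∫ x, M x ∂μ - ∫ x, M (f x) ∂μ := by rw [hM_comp, sub_self]
    _ ≤ ∫ x in D, M x ∂μ - ∫ x in D, M (f x) ∂μ := by
        rw [setIntegral_eq_integral_of_forall_compl_eq_zero (s := D) fun x hx =>
          le_antisymm (not_lt.1 hx) (hM_nonneg x)]
        exact sub_le_sub_left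
          (setIntegral_le_integral hMf (Eventually.of_forall fun x => hM_nonneg (f x))) _
    _ = ∫ x in D, (M x - M (f x)) ∂μ := (integral_sub hM.integrableOn hMf.integrableOn).symm
    _ ≤ ∫ x in D, g x ∂μ := by
        refine setIntegral_mono_ae_restrict (hM.sub hMf).integrableOn hg.integrableOn ?_
        filter_upwards [ae_restrict_mem₀ hD] with x hx using hMD x hx

theorem maximal_ergodic (hf : MeasurePreserving f μ μ) (hg : Integrable g μ) :
    0 ≤ ∫ x in {x | ∃ n, 0 < birkhoffSum f g n x}, g x ∂μ := by
  set D : ℕ → Set α := fun N => {x | 0 < partialSups (birkhoffSum f g) N x}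
  have hD : ⋃ N, D N = {x | ∃ n, 0 < birkhoffSum f g n x} := by
    ext x
    simp only [D, Set.mem_iUnion, Set.mem_ofPred_eq, Pi.partialSups_apply, lt_iff_not_ge,
      partialSups_le_iff, not_forall]
    exact ⟨fun ⟨_, n, _, h⟩ => ⟨n, h⟩, fun ⟨n, h⟩ => ⟨n, n, le_rfl, h⟩⟩
  have hDm : Monotone D := fun N N' h x hx => by
    simp only [D, Set.mem_ofPred_eq, Pi.partialSups_apply] at hx ⊢
    exact hx.trans_le (partialSups_monotone _ h)
  have hDnm (N : ℕ) : NullMeasurableSet (D N) μ :=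
    nullMeasurableSet_lt aemeasurable_const
      (hf.integrable_partialSups_birkhoffSum hg N).aemeasurable
  rw [← hD]
  exact ge_of_tendsto' (tendsto_setIntegral_of_monotone₀ hDnm hDm hg.integrableOn)
    (hf.setIntegral_pos_partialSups_birkhoffSum_nonneg hg)

end MeasureTheory.MeasurePreserving

namespace Ergodic

variable {α : Type*} [MeasurableSpace α] {μ : Measure α} [IsProbabilityMeasure μ] {f : α → α}
  {g : α → ℝ} {C : ℝ}

theorem ae_limsup_birkhoffAverage_le (hf : Ergodic f μ) (hg : Measurable g)
    (hC : ∀ x, |g x| ≤ C) :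
    ∀ᵐ x ∂μ, limsup (birkhoffAverage ℝ f g · x) atTop ≤ ∫ x, g x ∂μ := by
  have hL : Measurable fun x => limsup (birkhoffAverage ℝ f g · x) atTop :=
    .limsup fun n => measurable_birkhoffAverage hf.measurable hg n
  obtain ⟨c, hc⟩ := hf.ae_eq_const_of_ae_eq_comp₀ hL.nullMeasurable
    (Eventually.of_forall fun x => limsup_birkhoffAverage_apply_eq hC f x)
  suffices c ≤ ∫ x, g x ∂μ from hc.mono fun x hx => hx.trans_le this
  by_contra! hlt
  obtain ⟨a, hga, hac⟩ := exists_between hlt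
  -- Almost every orbit has a positive Birkhoff sum of `g - a`, so the maximal ergodic theorem
  -- gives `0 ≤ ∫ (g - a) = ∫ g - a`.
  have hD : ∀ᵐ x ∂μ, x ∈ {x | ∃ n, 0 < birkhoffSum f (fun y => g y - a) n x} := by
    filter_upwards [hc] with x hx
    have hfreq := frequently_lt_of_lt_limsup
      (isBoundedUnder_ge_birkhoffAverage hC f x).isCoboundedUnder_le (hac.trans_eq hx.symm)
    obtain ⟨n, hn, hn0⟩ := (hfreq.and_eventually (eventually_ne_atTop 0)).exists
    exact ⟨n, (lt_birkhoffAverage_iff hn0).1 hn⟩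
  have hgi : Integrable g μ := .of_bound hg.aestronglyMeasurable C (Eventually.of_forall hC)
  have := hf.toMeasurePreserving.maximal_ergodic (g := fun y => g y - a)
    (hgi.sub (integrable_const a))
  rw [Measure.restrict_eq_self_of_ae_mem hD, integral_sub hgi (integrable_const a),
    integral_const, probReal_univ, one_smul] at this
  linarith

theorem ae_tendsto_birkhoffAverage (hf : Ergodic f μ) (hg : Measurable g)
    (hC : ∀ x, |g x| ≤ C) :
    ∀ᵐ x ∂μ, Tendsto (birkhoffAverage ℝ f g · x) atTop (𝓝 (∫ x, g x ∂μ)) := by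
  have hC' : ∀ x, |(-g) x| ≤ C := by simpa using hC
  filter_upwards [hf.ae_limsup_birkhoffAverage_le hg hC,
    hf.ae_limsup_birkhoffAverage_le hg.neg hC'] with x hup hlow
  simp only [Pi.neg_apply, integral_neg] at hlow
  refine tendsto_order.2 ⟨fun a ha => ?_, fun a ha => ?_⟩
  · have := eventually_lt_of_limsup_lt (hlow.trans_lt (neg_lt_neg ha))
      (isBoundedUnder_le_birkhoffAverage hC' f x)
    filter_upwards [this] with n hn
    simpa [birkhoffAverage_neg] using hn
  · exact eventually_lt_of_limsup_lt (hup.trans_lt ha) (isBoundedUnder_le_birkhoffAverage hC f x)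

end Ergodic

theorem ergodic_of_measure_eq_zero_or_one {α : Type*} [MeasurableSpace α] {μ : Measure α}
    [IsProbabilityMeasure μ] {f : α → α} (hf : MeasurePreserving f μ μ)
    (h : ∀ s, MeasurableSet s → f ⁻¹' s = s → μ s = 0 ∨ μ s = 1) : Ergodic f μ where
  toMeasurePreserving := hf
  aeconst_set s hs hfs := eventuallyConst_set.2 <| (h s hs hfs).symm.imp
    (fun h1 => (ae_iff_measure_eq hs.nullMeasurableSet).2 (h1.trans measure_univ.symm))
    (fun h0 => measure_eq_zero_iff_ae_notMem.1 h0)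

def IsAsymptoticMean {α : Type*} [MeasurableSpace α] (μ ν : Measure α) (f : α → α) : Prop :=
  ∀ s, MeasurableSet s →
    Tendsto (fun T : ℕ => (∑ t ∈ range T, (μ (f^[t] ⁻¹' s)).toReal) / T) atTop (𝓝 (ν s).toReal)

theorem IsAsymptoticMean.toReal_measure_eq {α : Type*} [MeasurableSpace α] {μ ν : Measure α}
    {f : α → α} (h : IsAsymptoticMean μ ν f) {s : Set α} (hs : MeasurableSet s)
    (hfs : f ⁻¹' s = s) : (μ s).toReal = (ν s).toReal := by
  refine tendsto_nhds_unique ?_ (h s hs)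
  -- The Cesàro averages are the Birkhoff averages of `μ` along the orbit of `s` under
  -- `Set.preimage f`, and `s` is a fixed point of it.
  simpa [birkhoffAverage, birkhoffSum, ← Set.preimage_iterate_eq, div_eq_inv_mul] using
    Function.IsFixedPt.tendsto_birkhoffAverage ℝ (f := Set.preimage f) hfs (fun s => (μ s).toReal)

theorem shift_iterate_apply_zero {X : Type*} (x : ℕ → X) (t : ℕ) :
    (fun (y : ℕ → X) n => y (n + 1))^[t] x 0 = x t := by
  induction t generalizing x with
  | zero => rfl
  | succ t ih => rw [Function.iterate_succ_apply, ih]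

theorem birkhoffAverage_shift_indicator {X : Type*} (B : Set X) (x : ℕ → X) (T : ℕ) :
    birkhoffAverage ℝ (fun (y : ℕ → X) n => y (n + 1)) ({y | y 0 ∈ B}.indicator fun _ => 1) T x =
      (∑ t ∈ range T, B.indicator (fun _ => (1 : ℝ)) (x t)) / T := by
  simp only [birkhoffAverage, birkhoffSum, smul_eq_mul, div_eq_inv_mul]
  congr 1
  refine sum_congr rfl fun t _ => ?_
  rw [← shift_iterate_apply_zero x t]
  exact Set.indicator_comp_right (g := fun _ => (1 : ℝ)) fun y : ℕ → X => y 0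

theorem ams_ergodic_time_average_general {X : Type*} [MeasurableSpace X]
    (μ Q : Measure (ℕ → X)) [IsProbabilityMeasure Q]
    (θ : (ℕ → X) → (ℕ → X)) (hθ : θ = fun x t => x (t + 1))
    (hams : ∀ A : Set (ℕ → X), MeasurableSet A →
      Tendsto (fun T : ℕ => (∑ t ∈ Finset.range T, (μ (θ^[t] ⁻¹' A)).toReal) / T)
        atTop (nhds (Q A).toReal))
    (hQmp : MeasurePreserving θ Q Q)
    (herg : ∀ A : Set (ℕ → X), MeasurableSet A → θ ⁻¹' A = A → Q A = 0 ∨ Q A = 1)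
    (B : Set X) (hB : MeasurableSet B) :
    μ {x : ℕ → X | Tendsto
        (fun T : ℕ => (∑ t ∈ Finset.range T, Set.indicator B (fun _ => (1:ℝ)) (x t)) / T)
        atTop (nhds (Q {y : ℕ → X | y 0 ∈ B}).toReal)} = 1 := by
  set A := {y : ℕ → X | y 0 ∈ B}
  have hA : MeasurableSet A := measurable_pi_apply 0 hB
  set g := A.indicator fun _ => (1 : ℝ)
  have hg : Measurable g := measurable_const.indicator hA
  have hg_avg (x : ℕ → X) (T : ℕ) :
      (∑ t ∈ range T, B.indicator (fun _ => (1 : ℝ)) (x t)) / T = birkhoffAverage ℝ θ g T x := by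
    rw [hθ, birkhoffAverage_shift_indicator]
  have hgC : ∀ x, |g x| ≤ 1 := fun x => by
    by_cases hx : x ∈ A <;> simp [g, hx]
  have hg_int : ∫ x, g x ∂Q = (Q A).toReal := by
    simp [g, integral_indicator_const _ hA, measureReal_def]
  set G := {x | Tendsto (birkhoffAverage ℝ θ g · x) atTop (𝓝 (Q A).toReal)}
  have hG : MeasurableSet G :=
    measurableSet_tendsto _ fun n => measurable_birkhoffAverage hQmp.measurable hg n
  have hQG : Q G = 1 := by
    rw [← measure_univ (μ := Q), ← ae_iff_measure_eq hG.nullMeasurableSet, ← hg_int]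
    exact (ergodic_of_measure_eq_zero_or_one hQmp herg).ae_tendsto_birkhoffAverage hg hgC
  simp only [hg_avg]
  refine (ENNReal.toReal_eq_one_iff _).1 ?_
  rw [IsAsymptoticMean.toReal_measure_eq hams hG (preimage_setOf_tendsto_birkhoffAverage hgC θ _),
    hQG, ENNReal.toReal_one]

theorem ams_ergodic_time_average {X : Type*} [MeasurableSpace X]
    (μ Q : Measure (ℕ → X)) [IsProbabilityMeasure μ] [IsProbabilityMeasure Q]
    (θ : (ℕ → X) → (ℕ → X)) (hθ : θ = fun x t => x (t + 1))
    (hams : ∀ A : Set (ℕ → X), MeasurableSet A →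
      Tendsto (fun T : ℕ => (∑ t ∈ Finset.range T, (μ (θ^[t] ⁻¹' A)).toReal) / T)
        atTop (nhds (Q A).toReal))
    (hQmp : MeasurePreserving θ Q Q)
    (herg : ∀ A : Set (ℕ → X), MeasurableSet A → θ ⁻¹' A = A → Q A = 0 ∨ Q A = 1)
    (B : Set X) (hB : MeasurableSet B) :
    μ {x : ℕ → X | Tendsto
        (fun T : ℕ => (∑ t ∈ Finset.range T, Set.indicator B (fun _ => (1:ℝ)) (x t)) / T)
        atTop (nhds (Q {y : ℕ → X | y 0 ∈ B}).toReal)} = 1 :=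
  ams_ergodic_time_average_general μ Q θ hθ hams hQmp herg B hB
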